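/- arXiv:2103.16887 — 6 statements merged into one kernel-verified Lean document; each statement's English description precedes it below -/
import Mathlib

section
/- For any two discrete random variables X and Y with joint distribution p(x,y) and any conditional probability distribution q(x|y), the mutual information satisfies I(X:Y) ≥ E_{p(x,y)}[log q(x|y)] + H(X), where H(X) is the Shannon entropy of X (the Barber–Agakov lower bound). -/
/-!
Split `log (p(x,y) / (p(x) p(y)))` as `log q(x|y) - log p(x) + log (p(x,y) / (q(x|y) p(y)))`.
Averaged over `p(x,y)`, the first two terms give `E[log q(x|y)] + H(X)`, and the last one is the
Kullback–Leibler divergence of `p(x,y)` from `q(x|y) p(y)`, which is nonnegative by Gibbs'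
inequality because both have the same total mass.
-/

open Finset Real

theorem sub_le_mul_log_div {a b : ℝ} (ha : 0 ≤ a) (hb : 0 ≤ b) (hab : 0 < a → 0 < b) :
    a - b ≤ a * log (a / b) := by
  rcases ha.eq_or_lt with rfl | ha
  · simpa using hb
  have key : 1 - (a / b)⁻¹ ≤ log (a / b) := one_sub_inv_le_log_of_pos (div_pos ha (hab ha))
  calc a - b = a * (1 - (a / b)⁻¹) := by field_simp
    _ ≤ a * log (a / b) := mul_le_mul_of_nonneg_left key ha.le

theorem sum_sub_sum_le_sum_mul_log_div {ι : Type*} [Fintype ι] {a b : ι → ℝ}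
    (ha : ∀ i, 0 ≤ a i) (hb : ∀ i, 0 ≤ b i) (hab : ∀ i, 0 < a i → 0 < b i) :
    ∑ i, a i - ∑ i, b i ≤ ∑ i, a i * log (a i / b i) := by
  rw [← sum_sub_distrib]
  exact sum_le_sum fun i _ => sub_le_mul_log_div (ha i) (hb i) (hab i)

theorem mul_log_div_mul_eq {a u v c : ℝ} (ha : 0 ≤ a) (hau : a ≤ u) (hav : a ≤ v) (hc : 0 < c) :
    a * log (a / (u * v)) = a * log c - a * log u + a * log (a / (c * v)) := by
  rcases ha.eq_or_lt with rfl | ha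
  · simp
  have hu : u ≠ 0 := (ha.trans_le hau).ne'
  have hv : v ≠ 0 := (ha.trans_le hav).ne'
  rw [log_div ha.ne' (mul_ne_zero hu hv), log_div ha.ne' (mul_ne_zero hc.ne' hv),
    log_mul hu hv, log_mul hc.ne' hv]
  ring

theorem barber_agakov_bound_general {X Y : Type*} [Fintype X] [Fintype Y]
    (p : X → Y → ℝ) (q : X → Y → ℝ)
    (hp : ∀ x y, 0 ≤ p x y)
    (hq : ∀ x y, 0 < q x y) (hqsum : ∀ y, ∑ x, q x y = 1) :
    (∑ x, ∑ y, p x y * Real.log (q x y)) +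
      (-∑ x, (∑ y, p x y) * Real.log (∑ y, p x y)) ≤
    ∑ x, ∑ y, p x y * Real.log (p x y / ((∑ y', p x y') * (∑ x', p x' y))) := by
  have hpx : ∀ x y, p x y ≤ ∑ y', p x y' := fun x y =>
    single_le_sum (fun y _ => hp x y) (mem_univ y)
  have hpy : ∀ x y, p x y ≤ ∑ x', p x' y := fun x y =>
    single_le_sum (fun x _ => hp x y) (mem_univ x)
  have hmass : ∑ x, ∑ y, q x y * ∑ x', p x' y = ∑ x, ∑ y, p x y := by
    rw [sum_comm]
    simp_rw [← sum_mul, hqsum, one_mul]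
    exact sum_comm
  have hkl : 0 ≤ ∑ x, ∑ y, p x y * log (p x y / (q x y * ∑ x', p x' y)) := by
    simpa only [Fintype.sum_prod_type, hmass, sub_self] using
      sum_sub_sum_le_sum_mul_log_div (a := fun z : X × Y => p z.1 z.2)
        (b := fun z => q z.1 z.2 * ∑ x', p x' z.2) (fun z => hp z.1 z.2)
        (fun z => mul_nonneg (hq z.1 z.2).le (sum_nonneg fun x' _ => hp x' z.2))
        (fun z hz => mul_pos (hq z.1 z.2) (hz.trans_le (hpy z.1 z.2)))
  have hent : ∑ x, (∑ y, p x y) * log (∑ y, p x y) = ∑ x, ∑ y, p x y * log (∑ y', p x y') := by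
    simp_rw [sum_mul]
  have hsplit : ∀ x y, p x y * log (p x y / ((∑ y', p x y') * ∑ x', p x' y)) =
      p x y * log (q x y) - p x y * log (∑ y', p x y') +
        p x y * log (p x y / (q x y * ∑ x', p x' y)) :=
    fun x y => mul_log_div_mul_eq (hp x y) (hpx x y) (hpy x y) (hq x y)
  simp_rw [hent, hsplit, sum_add_distrib, sum_sub_distrib]
  linarith

/-- Barber–Agakov lower bound on mutual information:
`I(X:Y) ≥ E_{p(x,y)}[log q(x|y)] + H(X)` for any conditional pmf `q`. -/
theorem barber_agakov_bound {X Y : Type*} [Fintype X] [Fintype Y]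
    (p : X → Y → ℝ) (q : X → Y → ℝ)
    (hp : ∀ x y, 0 ≤ p x y) (hpsum : ∑ x, ∑ y, p x y = 1)
    (hq : ∀ x y, 0 < q x y) (hqsum : ∀ y, ∑ x, q x y = 1) :
    (∑ x, ∑ y, p x y * Real.log (q x y)) +
      (-∑ x, (∑ y, p x y) * Real.log (∑ y, p x y)) ≤
    ∑ x, ∑ y, p x y * Real.log (p x y / ((∑ y', p x y') * (∑ x', p x' y))) :=
  barber_agakov_bound_general p q hp hq hqsum
end

section
/- For any two finite random variables X, Y with joint pmf p(x,y) and any real-valued function f(x,y), the mutual information satisfies I(X:Y) ≥ E_{p(x,y)}[f(x,y)] - E_{p(x)p(y)}[e^{f(x,y)}/a(y)] - E_{p(y)}[log a(y)] + 1, for any positive baseline function a(y) > 0 (the TUBA lower bound). -/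
/-!
The bound holds summand by summand: with `t = p(x,y)`, `s = p(x)p(y)` and `w = s e^{f(x,y)} / a(y)`,
the `(x, y)` term is `t - w ≤ t log (t / w)`, which is `z - 1 ≤ z log z` at `z = t / w`
(the constant `1` being `∑ p(x,y)`).
-/

open Real Finset

lemma sub_le_mul_log_div_s4 {t w : ℝ} (ht : 0 ≤ t) (hw : 0 < w) : t - w ≤ t * log (t / w) := by
  have h := mul_le_mul_of_nonneg_left (self_sub_one_le_mul_log (div_nonneg ht hw.le)) hw.le
  calc t - w = w * (t / w - 1) := by field_simp
    _ ≤ w * (t / w * log (t / w)) := h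
    _ = t * log (t / w) := by field_simp

lemma tuba_summand_le {t s u b : ℝ} (ht : 0 ≤ t) (hs : 0 ≤ s) (hb : 0 < b)
    (hts : 0 < t → 0 < s) :
    t * u - s * (exp u / b) - t * log b + t ≤ t * log (t / s) := by
  rcases ht.eq_or_lt with rfl | ht
  · have : 0 ≤ s * (exp u / b) := by positivity
    simp only [zero_mul, zero_div, log_zero, mul_zero]
    linarith
  · have hs := hts ht
    have hlog : log (t / (s * (exp u / b))) = log (t / s) - u + log b := by
      rw [log_div ht.ne' (by positivity), log_mul hs.ne' (by positivity),
        log_div (exp_pos u).ne' hb.ne', log_exp, log_div ht.ne' hs.ne']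
      ring
    have := sub_le_mul_log_div_s4 ht.le (by positivity : 0 < s * (exp u / b))
    rw [hlog] at this
    linarith

lemma marginal_mul_marginal_pos {X Y : Type*} [Fintype X] [Fintype Y] {p : X → Y → ℝ}
    (hp : ∀ x y, 0 ≤ p x y) {x : X} {y : Y} (hxy : 0 < p x y) :
    0 < (∑ y', p x y') * (∑ x', p x' y) :=
  mul_pos (hxy.trans_le (single_le_sum (fun y' _ => hp x y') (mem_univ y)))
    (hxy.trans_le (single_le_sum (fun x' _ => hp x' y) (mem_univ x)))

/-- The TUBA lower bound on mutual information: for any critic `f` and any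
positive baseline `a(y)`,
`I(X:Y) ≥ E_{p(x,y)}[f] - E_{p(x)p(y)}[e^f / a(y)] - E_{p(y)}[log a(y)] + 1`. -/
theorem tuba_bound {X Y : Type*} [Fintype X] [Fintype Y]
    (p : X → Y → ℝ) (f : X → Y → ℝ) (a : Y → ℝ)
    (hp : ∀ x y, 0 ≤ p x y) (hpsum : ∑ x, ∑ y, p x y = 1)
    (ha : ∀ y, 0 < a y) :
    (∑ x, ∑ y, p x y * f x y)
      - (∑ x, ∑ y, (∑ y', p x y') * (∑ x', p x' y) * (Real.exp (f x y) / a y))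
      - (∑ y, (∑ x', p x' y) * Real.log (a y)) + 1 ≤
    ∑ x, ∑ y, p x y * Real.log (p x y / ((∑ y', p x y') * (∑ x', p x' y))) := by
  have hlog : ∑ y, (∑ x', p x' y) * log (a y) = ∑ x, ∑ y, p x y * log (a y) := by
    rw [sum_comm]
    simp only [sum_mul]
  rw [hlog, ← hpsum]
  simp only [← sum_sub_distrib, ← sum_add_distrib]
  refine sum_le_sum fun x _ => sum_le_sum fun y _ => tuba_summand_le (hp x y) ?_ (ha y)
    (marginal_mul_marginal_pos hp)
  exact mul_nonneg (sum_nonneg fun y' _ => hp x y') (sum_nonneg fun x' _ => hp x' y)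
end

section
/- For any two finite random variables X, Y and any real-valued function f(x,y), I(X:Y) ≥ E_{p(x,y)}[f(x,y)] - e^{-1} E_{p(x)p(y)}[e^{f(x,y)}] (the NWJ / MINE-f lower bound). -/
/-!
The bound holds term by term: `a t - e⁻¹ b eᵗ ≤ a log (a / b)` is the Fenchel–Young inequality
for `a ↦ a log a`, and the product of the marginals is positive wherever `p` is.
-/

open Real Finset

/-- Substituting `u = t - log (a / b)` turns this into `u ≤ exp (u - 1)`. -/
lemma mul_sub_exp_le_mul_log_div {a b : ℝ} (t : ℝ) (ha : 0 ≤ a) (hb : 0 ≤ b)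
    (hab : 0 < a → 0 < b) :
    a * t - (exp 1)⁻¹ * (b * exp t) ≤ a * log (a / b) := by
  rcases ha.eq_or_lt with rfl | ha
  · simp only [zero_mul, zero_sub, neg_le, neg_zero]
    positivity
  have hb := hab ha
  set u := t - log (a / b)
  have hu : a * u ≤ a * exp (u - 1) :=
    mul_le_mul_of_nonneg_left (by linarith [add_one_le_exp (u - 1)]) ha.le
  have hexp : a * exp (u - 1) = (exp 1)⁻¹ * (b * exp t) := by
    rw [exp_sub, exp_sub, exp_log (div_pos ha hb)]
    field_simp
  linarith

theorem nwj_bound_general {X Y : Type*} [Fintype X] [Fintype Y]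
    (p : X → Y → ℝ) (f : X → Y → ℝ)
    (hp : ∀ x y, 0 ≤ p x y) :
    (∑ x, ∑ y, p x y * f x y)
      - (Real.exp 1)⁻¹ * (∑ x, ∑ y, (∑ y', p x y') * (∑ x', p x' y) * Real.exp (f x y)) ≤
    ∑ x, ∑ y, p x y * Real.log (p x y / ((∑ y', p x y') * (∑ x', p x' y))) := by
  have hmarg_nonneg : ∀ x y, 0 ≤ (∑ y', p x y') * ∑ x', p x' y := fun x y =>
    mul_nonneg (sum_nonneg fun y' _ => hp x y') (sum_nonneg fun x' _ => hp x' y)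
  have hmarg_pos : ∀ x y, 0 < p x y → 0 < (∑ y', p x y') * ∑ x', p x' y := fun x y h =>
    mul_pos (h.trans_le (single_le_sum (fun y' _ => hp x y') (mem_univ y)))
      (h.trans_le (single_le_sum (fun x' _ => hp x' y) (mem_univ x)))
  rw [mul_sum, ← sum_sub_distrib]
  refine sum_le_sum fun x _ => ?_
  rw [mul_sum, ← sum_sub_distrib]
  refine sum_le_sum fun y _ => ?_
  exact mul_sub_exp_le_mul_log_div (f x y) (hp x y) (hmarg_nonneg x y) (hmarg_pos x y)

/-- The NWJ (MINE-f) lower bound on mutual information: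
`I(X:Y) ≥ E_{p(x,y)}[f] - e⁻¹ E_{p(x)p(y)}[e^f]`. -/
theorem nwj_bound {X Y : Type*} [Fintype X] [Fintype Y]
    (p : X → Y → ℝ) (f : X → Y → ℝ)
    (hp : ∀ x y, 0 ≤ p x y) (hpsum : ∑ x, ∑ y, p x y = 1) :
    (∑ x, ∑ y, p x y * f x y)
      - (Real.exp 1)⁻¹ * (∑ x, ∑ y, (∑ y', p x y') * (∑ x', p x' y) * Real.exp (f x y)) ≤
    ∑ x, ∑ y, p x y * Real.log (p x y / ((∑ y', p x y') * (∑ x', p x' y))) :=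
  nwj_bound_general p f hp
end

section
/- For any real-valued function f(x,y), the functional I_NWJ[f] = E_{p(x,y)}[f] - e^{-1} E_{p(x)p(y)}[e^f] satisfies I_NWJ[f] ≤ I(X:Y), with equality iff f = f* = 1 + log(p(x,y)/(p(x)p(y))) on the support of p(x)p(y). -/
/-
Pointwise, with `m = p(x)p(y) > 0`, the substitution `s = t - 1 - log (p / m)` turns the
defect `p log (p / m) - (p t - e⁻¹ m eᵗ)` into `p (eˢ - (s + 1))`, which is nonnegative and
vanishes exactly at `s = 0`, i.e. at `t = f*`. Where `m = 0` the joint weight vanishes too,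
so such points contribute nothing to either side and impose no condition. Summing over
`X × Y` gives the bound, and a sum of termwise inequalities is an equality iff every term is.
-/

open Real

theorem Real.exp_eq_add_one_iff {s : ℝ} : exp s = s + 1 ↔ s = 0 :=
  ⟨fun h => by_contra fun hs => (add_one_lt_exp hs).ne' h, fun h => by simp [h]⟩

section Pointwise

variable {a m : ℝ}

theorem mul_log_div_sub_nwj_integrand (ha : 0 < a) (hm : 0 < m) (t : ℝ) :
    a * log (a / m) - (a * t - (exp 1)⁻¹ * (m * exp t)) =
      a * (exp (t - 1 - log (a / m)) - (t - 1 - log (a / m) + 1)) := by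
  rw [exp_sub, exp_sub, exp_log (div_pos ha hm)]
  field_simp
  ring

theorem nwj_integrand_le_of_pos (ha : 0 < a) (hm : 0 < m) (t : ℝ) :
    a * t - (exp 1)⁻¹ * (m * exp t) ≤ a * log (a / m) := by
  have := mul_log_div_sub_nwj_integrand ha hm t
  nlinarith [add_one_le_exp (t - 1 - log (a / m))]

theorem nwj_integrand_eq_iff_of_pos (ha : 0 < a) (hm : 0 < m) (t : ℝ) :
    a * t - (exp 1)⁻¹ * (m * exp t) = a * log (a / m) ↔ t = 1 + log (a / m) := by
  rw [← sub_eq_zero, ← neg_eq_zero, neg_sub, mul_log_div_sub_nwj_integrand ha hm,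
    mul_eq_zero, or_iff_right ha.ne', sub_eq_zero, exp_eq_add_one_iff, sub_sub, sub_eq_zero]

theorem nwj_integrand_le_and_eq_iff (h : 0 < a ∧ 0 < m ∨ a = 0 ∧ m = 0) (t : ℝ) :
    a * t - (exp 1)⁻¹ * (m * exp t) ≤ a * log (a / m) ∧
      (a * t - (exp 1)⁻¹ * (m * exp t) = a * log (a / m) ↔
        (0 < m → t = 1 + log (a / m))) := by
  rcases h with ⟨ha, hm⟩ | ⟨rfl, rfl⟩
  · exact ⟨nwj_integrand_le_of_pos ha hm t,
      (nwj_integrand_eq_iff_of_pos ha hm t).trans ⟨fun h _ => h, fun h => h hm⟩⟩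
  · simp

end Pointwise

theorem pos_and_marginal_mul_pos_or_eq_zero {X Y : Type*} [Fintype X] [Fintype Y]
    {p : X → Y → ℝ} (hp : ∀ x y, 0 ≤ p x y)
    (hsupp : ∀ x y, 0 < (∑ y', p x y') → 0 < (∑ x', p x' y) → 0 < p x y) (x : X) (y : Y) :
    0 < p x y ∧ 0 < (∑ y', p x y') * (∑ x', p x' y) ∨
      p x y = 0 ∧ (∑ y', p x y') * (∑ x', p x' y) = 0 := by
  rcases (hp x y).eq_or_lt with h0 | hpos
  · refine Or.inr ⟨h0.symm, ?_⟩
    rcases (Finset.sum_nonneg fun y' _ => hp x y').eq_or_lt with hx0 | hx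
    · rw [← hx0, zero_mul]
    rcases (Finset.sum_nonneg fun x' _ => hp x' y).eq_or_lt with hy0 | hy
    · rw [← hy0, mul_zero]
    exact absurd (hsupp x y hx hy) (h0 ▸ lt_irrefl 0)
  · refine Or.inl ⟨hpos, mul_pos ?_ ?_⟩
    · exact hpos.trans_le (Finset.single_le_sum (fun y' _ => hp x y') (Finset.mem_univ y))
    · exact hpos.trans_le (Finset.single_le_sum (fun x' _ => hp x' y) (Finset.mem_univ x))

theorem Fintype.sum_sum_eq_sum_sum_iff_of_le {X Y : Type*} [Fintype X] [Fintype Y]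
    {g h : X → Y → ℝ} (hle : ∀ x y, g x y ≤ h x y) :
    ∑ x, ∑ y, g x y = ∑ x, ∑ y, h x y ↔ ∀ x y, g x y = h x y := by
  simp only [Finset.sum_eq_sum_iff_of_le fun x _ => Finset.sum_le_sum fun y _ => hle x y,
    Finset.sum_eq_sum_iff_of_le fun y _ => hle _ y, Finset.mem_univ, true_implies]

theorem nwj_le_mi_iff_optimal_general {X Y : Type*} [Fintype X] [Fintype Y]
    (p : X → Y → ℝ) (f : X → Y → ℝ)
    (hp : ∀ x y, 0 ≤ p x y)
    (hsupp : ∀ x y, 0 < (∑ y', p x y') → 0 < (∑ x', p x' y) → 0 < p x y) :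
    ((∑ x, ∑ y, p x y * f x y)
        - (Real.exp 1)⁻¹ *
          (∑ x, ∑ y, (∑ y', p x y') * (∑ x', p x' y) * Real.exp (f x y)) ≤
      ∑ x, ∑ y, p x y * Real.log (p x y / ((∑ y', p x y') * (∑ x', p x' y)))) ∧
    ((∑ x, ∑ y, p x y * f x y)
        - (Real.exp 1)⁻¹ *
          (∑ x, ∑ y, (∑ y', p x y') * (∑ x', p x' y) * Real.exp (f x y)) =
      (∑ x, ∑ y, p x y * Real.log (p x y / ((∑ y', p x y') * (∑ x', p x' y)))) ↔
      ∀ x y, 0 < (∑ y', p x y') * (∑ x', p x' y) →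
        f x y = 1 + Real.log (p x y / ((∑ y', p x y') * (∑ x', p x' y)))) := by
  have hterm x y := nwj_integrand_le_and_eq_iff
    (pos_and_marginal_mul_pos_or_eq_zero hp hsupp x y) (f x y)
  have hsum : (∑ x, ∑ y, p x y * f x y)
        - (exp 1)⁻¹ * (∑ x, ∑ y, (∑ y', p x y') * (∑ x', p x' y) * exp (f x y)) =
      ∑ x, ∑ y, (p x y * f x y - (exp 1)⁻¹ * ((∑ y', p x y') * (∑ x', p x' y) * exp (f x y))) := by
    simp only [Finset.mul_sum, ← Finset.sum_sub_distrib]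
  rw [hsum, Fintype.sum_sum_eq_sum_sum_iff_of_le fun x y => (hterm x y).1]
  exact ⟨Finset.sum_le_sum fun x _ => Finset.sum_le_sum fun y _ => (hterm x y).1,
    forall₂_congr fun x y => (hterm x y).2⟩

/-- The NWJ functional is bounded above by the mutual information, with
equality iff the critic equals `f* = 1 + log(p(x,y)/(p(x)p(y)))` on the
support of the product of marginals. -/
theorem nwj_le_mi_iff_optimal {X Y : Type*} [Fintype X] [Fintype Y]
    (p : X → Y → ℝ) (f : X → Y → ℝ)
    (hp : ∀ x y, 0 ≤ p x y) (hpsum : ∑ x, ∑ y, p x y = 1)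
    (hsupp : ∀ x y, 0 < (∑ y', p x y') → 0 < (∑ x', p x' y) → 0 < p x y) :
    ((∑ x, ∑ y, p x y * f x y)
        - (Real.exp 1)⁻¹ *
          (∑ x, ∑ y, (∑ y', p x y') * (∑ x', p x' y) * Real.exp (f x y)) ≤
      ∑ x, ∑ y, p x y * Real.log (p x y / ((∑ y', p x y') * (∑ x', p x' y)))) ∧
    ((∑ x, ∑ y, p x y * f x y)
        - (Real.exp 1)⁻¹ *
          (∑ x, ∑ y, (∑ y', p x y') * (∑ x', p x' y) * Real.exp (f x y)) =
      (∑ x, ∑ y, p x y * Real.log (p x y / ((∑ y', p x y') * (∑ x', p x' y)))) ↔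
      ∀ x y, 0 < (∑ y', p x y') * (∑ x', p x' y) →
        f x y = 1 + Real.log (p x y / ((∑ y', p x y') * (∑ x', p x' y)))) :=
  nwj_le_mi_iff_optimal_general p f hp hsupp
end

section
/- InfoNCE is a lower bound on mutual information: for i.i.d. pairs (X_k,Y_k) ~ p(x,y), k=1..K, and any critic f, I(X:Y) ≥ I_NCE[f] where I_NCE[f] = (1/K) E[ Σ_j log( e^{f(x_j,y_j)} / ((1/K) Σ_i e^{f(x_i,y_j)}) ) ]. -/
open Finset Real

/-! For each `j`, apply the pointwise NWJ inequality `s log a ≤ s log (s / t) + t a - s` with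
`a = e^{f(x_j,y_j)} / m(y_j; x_{1:K})`, `s` the i.i.d. weight of the sample and `t` the weight in
which the `j`-th pair is replaced by an independent draw from the product of the marginals.
The `s log (s / t)` terms average to `I(X:Y)` and the `-s` terms to `-1`. The `t a` terms do not
see the joint law of the `j`-th pair, and summed over `j` they give `K`, because the ratios
`e^{f(x_j,y)} / m(y)` add up to `K` for every `y`; this cancels the `K` terms `-1`. -/

lemma mul_log_le_mul_log_div_add_mul_sub {s t a : ℝ} (hs : 0 ≤ s) (ht : 0 ≤ t)
    (hst : t = 0 → s = 0) (ha : 0 < a) : s * log a ≤ s * log (s / t) + t * a - s := by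
  rcases hs.eq_or_lt with rfl | hs
  · simpa using mul_nonneg ht ha.le
  have ht : 0 < t := ht.lt_of_ne fun h => hs.ne' (hst h.symm)
  have key : log (t * a / s) ≤ t * a / s - 1 := log_le_sub_one_of_pos (by positivity)
  rw [log_div (by positivity) hs.ne', log_mul ht.ne' ha.ne'] at key
  calc s * log a = s * (log t + log a - log s) + s * (log s - log t) := by ring
    _ ≤ s * (t * a / s - 1) + s * (log s - log t) := by gcongr
    _ = s * log (s / t) + t * a - s := by rw [log_div hs.ne' ht.ne']; field_simp; ring

lemma Fintype.sum_prod_erase_mul {ι Z : Type*} [Fintype ι] [DecidableEq ι] [Fintype Z]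
    (F : ι → Z → ℝ) (ψ : Z → ℝ) (j : ι) :
    ∑ zs : ι → Z, (∏ k ∈ univ.erase j, F k (zs k)) * ψ (zs j)
      = (∏ k ∈ univ.erase j, ∑ z, F k z) * ∑ z, ψ z := by
  set G := Function.update F j ψ
  have erase_G : ∀ k ∈ univ.erase j, G k = F k :=
    fun k hk => Function.update_of_ne (ne_of_mem_erase hk) _ _
  calc ∑ zs : ι → Z, (∏ k ∈ univ.erase j, F k (zs k)) * ψ (zs j)
      = ∑ zs : ι → Z, ∏ k, G k (zs k) := by
        refine Finset.sum_congr rfl fun zs _ => ?_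
        rw [← prod_erase_mul univ _ (mem_univ j)]
        simp [G, Finset.prod_congr rfl fun k hk => congrFun (erase_G k hk) (zs k)]
    _ = ∏ k, ∑ z, G k z := (Fintype.prod_sum G).symm
    _ = (∏ k ∈ univ.erase j, ∑ z, F k z) * ∑ z, ψ z := by
        rw [← prod_erase_mul univ _ (mem_univ j)]
        simp [G, Finset.prod_congr rfl fun k hk => congrArg (fun g => ∑ z, g z) (erase_G k hk)]

section

variable {X Y : Type*} {K : ℕ}

noncomputable def nceRatio (f : X → Y → ℝ) (xs : Fin K → X) (y : Y) (j : Fin K) : ℝ :=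
  exp (f (xs j) y) / ((1 / (K : ℝ)) * ∑ i, exp (f (xs i) y))

lemma nceRatio_pos (f : X → Y → ℝ) (xs : Fin K → X) (y : Y) (j : Fin K) :
    0 < nceRatio f xs y j := by
  have : Nonempty (Fin K) := ⟨j⟩
  have hK : (0 : ℝ) < K := by exact_mod_cast j.pos
  unfold nceRatio
  exact div_pos (exp_pos _) (mul_pos (by positivity) (sum_pos (fun i _ => exp_pos _) univ_nonempty))

lemma sum_nceRatio (f : X → Y → ℝ) (xs : Fin K → X) (y : Y) :
    ∑ j, nceRatio f xs y j = K := by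
  rcases K.eq_zero_or_pos with rfl | hK
  · simp
  have : Nonempty (Fin K) := ⟨⟨0, hK⟩⟩
  have hS : ∑ i, exp (f (xs i) y) ≠ 0 := (sum_pos (fun i _ => exp_pos _) univ_nonempty).ne'
  have hK0 : (K : ℝ) ≠ 0 := Nat.cast_ne_zero.2 hK.ne'
  simp only [nceRatio, ← sum_div]
  field_simp

variable [Fintype X] [Fintype Y] (p : X → Y → ℝ)

noncomputable def mutualInfo : ℝ :=
  ∑ x, ∑ y, p x y * log (p x y / ((∑ y', p x y') * (∑ x', p x' y)))

lemma sum_iid_mul_apply (hpsum : ∑ x, ∑ y, p x y = 1) (j : Fin K) (φ : X → Y → ℝ) :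
    ∑ xs : Fin K → X, ∑ ys : Fin K → Y, (∏ k, p (xs k) (ys k)) * φ (xs j) (ys j)
      = ∑ x, ∑ y, p x y * φ x y := by
  have inner : ∀ xs : Fin K → X,
      ∑ ys : Fin K → Y, (∏ k, p (xs k) (ys k)) * φ (xs j) (ys j)
        = (∏ k ∈ univ.erase j, ∑ y, p (xs k) y) * ∑ y, p (xs j) y * φ (xs j) y := by
    intro xs
    rw [← Fintype.sum_prod_erase_mul (fun k y => p (xs k) y)]
    refine Finset.sum_congr rfl fun ys _ => ?_
    rw [← prod_erase_mul univ _ (mem_univ j)]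
    ring
  simp only [inner]
  rw [Fintype.sum_prod_erase_mul (fun _ x => ∑ y, p x y) (fun x => ∑ y, p x y * φ x y), hpsum,
    prod_const_one, one_mul]

lemma sum_iid_erase_mul_marginals (j : Fin K) (g : (Fin K → X) → Y → ℝ) :
    ∑ xs : Fin K → X, ∑ ys : Fin K → Y, (∏ k ∈ univ.erase j, p (xs k) (ys k)) *
        ((∑ y', p (xs j) y') * ((∑ x', p x' (ys j)) * g xs (ys j)))
      = ∑ xs : Fin K → X, (∏ k, ∑ y', p (xs k) y') * ∑ y, (∑ x', p x' y) * g xs y := by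
  refine Finset.sum_congr rfl fun xs _ => ?_
  rw [Fintype.sum_prod_erase_mul (fun k y => p (xs k) y)
    (fun y => (∑ y', p (xs j) y') * ((∑ x', p x' y) * g xs y)), ← prod_erase_mul univ _ (mem_univ j),
    ← mul_sum]
  ring

lemma sum_iid_mul_log_le (hp : ∀ x y, 0 ≤ p x y) (hpsum : ∑ x, ∑ y, p x y = 1) (j : Fin K)
    (a : (Fin K → X) → Y → ℝ) (ha : ∀ xs y, 0 < a xs y) :
    ∑ xs : Fin K → X, ∑ ys : Fin K → Y, (∏ k, p (xs k) (ys k)) * log (a xs (ys j))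
      ≤ mutualInfo p
        + ∑ xs : Fin K → X, (∏ k, ∑ y', p (xs k) y') * ∑ y, (∑ x', p x' y) * a xs y - 1 := by
  have pointwise : ∀ (xs : Fin K → X) (ys : Fin K → Y),
      (∏ k, p (xs k) (ys k)) * log (a xs (ys j))
        ≤ (∏ k, p (xs k) (ys k)) *
            log (p (xs j) (ys j) / ((∑ y', p (xs j) y') * (∑ x', p x' (ys j))))
          + (∏ k ∈ univ.erase j, p (xs k) (ys k)) *
            ((∑ y', p (xs j) y') * ((∑ x', p x' (ys j)) * a xs (ys j)))
          - ∏ k, p (xs k) (ys k) := by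
    intro xs ys
    set x := xs j
    set y := ys j
    have hx : p x y ≤ ∑ y', p x y' := single_le_sum (fun y' _ => hp x y') (mem_univ y)
    have hy : p x y ≤ ∑ x', p x' y := single_le_sum (fun x' _ => hp x' y) (mem_univ x)
    have nwj := mul_log_le_mul_log_div_add_mul_sub (hp x y)
      (mul_nonneg ((hp x y).trans hx) ((hp x y).trans hy))
      (fun h => by rcases mul_eq_zero.1 h with h | h <;> linarith [hp x y]) (ha xs y)
    have hR : 0 ≤ ∏ k ∈ univ.erase j, p (xs k) (ys k) := prod_nonneg fun k _ => hp _ _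
    rw [← prod_erase_mul univ _ (mem_univ j)]
    linarith [mul_le_mul_of_nonneg_left nwj hR]
  have total : ∑ xs : Fin K → X, ∑ ys : Fin K → Y, ∏ k, p (xs k) (ys k) = 1 := by
    simpa [hpsum] using sum_iid_mul_apply p hpsum j (fun _ _ => 1)
  calc ∑ xs : Fin K → X, ∑ ys : Fin K → Y, (∏ k, p (xs k) (ys k)) * log (a xs (ys j))
      ≤ _ := sum_le_sum fun xs _ => sum_le_sum fun ys _ => pointwise xs ys
    _ = _ := by
      simp only [sum_add_distrib, sum_sub_distrib]
      rw [sum_iid_mul_apply p hpsum j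
        (fun x y => log (p x y / ((∑ y', p x y') * ∑ x', p x' y))),
        sum_iid_erase_mul_marginals, total]
      rfl

lemma sum_iid_nceRatio {q : X → ℝ} {r : Y → ℝ} (hq : ∑ x, q x = 1) (hr : ∑ y, r y = 1)
    (f : X → Y → ℝ) :
    ∑ j : Fin K, ∑ xs : Fin K → X, (∏ k, q (xs k)) * ∑ y, r y * nceRatio f xs y j = K := by
  have inner : ∀ xs : Fin K → X, ∑ j, ∑ y, r y * nceRatio f xs y j = K := fun xs => by
    rw [sum_comm]
    simp only [← mul_sum, sum_nceRatio, ← sum_mul, hr, one_mul]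
  rw [sum_comm]
  simp only [← mul_sum, inner, ← sum_mul, ← Fintype.prod_sum, hq, prod_const_one, one_mul]

end

/-- InfoNCE is a lower bound on the mutual information: `I(X:Y) ≥ I_NCE[f]`. -/
theorem infoNCE_le_mi {X Y : Type*} [Fintype X] [Fintype Y]
    (K : ℕ) (hK : 1 ≤ K)
    (p : X → Y → ℝ) (f : X → Y → ℝ)
    (hp : ∀ x y, 0 ≤ p x y) (hpsum : ∑ x, ∑ y, p x y = 1) :
    (∑ xs : Fin K → X, ∑ ys : Fin K → Y,
      (∏ k, p (xs k) (ys k)) *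
        ((1 / (K : ℝ)) * ∑ j, Real.log (Real.exp (f (xs j) (ys j)) /
          ((1 / (K : ℝ)) * ∑ i, Real.exp (f (xs i) (ys j)))))) ≤
    ∑ x, ∑ y, p x y * Real.log (p x y / ((∑ y', p x y') * (∑ x', p x' y))) := by
  have hK0 : (K : ℝ) ≠ 0 := Nat.cast_ne_zero.2 (by omega)
  have hpY : ∑ y, ∑ x, p x y = 1 := by rw [sum_comm, hpsum]
  change ∑ xs : Fin K → X, ∑ ys : Fin K → Y, (∏ k, p (xs k) (ys k)) *
      ((1 / (K : ℝ)) * ∑ j, log (nceRatio f xs (ys j) j)) ≤ mutualInfo p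
  calc _ = (1 / (K : ℝ)) * ∑ j : Fin K, ∑ xs : Fin K → X, ∑ ys : Fin K → Y,
          (∏ k, p (xs k) (ys k)) * log (nceRatio f xs (ys j) j) := by
        simp only [mul_sum, mul_left_comm _ (1 / (K : ℝ))]
        exact (sum_congr rfl fun _ _ => sum_comm).trans sum_comm
    _ ≤ (1 / (K : ℝ)) * ∑ j : Fin K, (mutualInfo p + ∑ xs : Fin K → X,
          (∏ k, ∑ y', p (xs k) y') * ∑ y, (∑ x', p x' y) * nceRatio f xs y j - 1) := by
        gcongr with j
        exact sum_iid_mul_log_le p hp hpsum j _ fun xs y => nceRatio_pos f xs y j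
    _ = mutualInfo p := by
        rw [sum_sub_distrib, sum_add_distrib, sum_iid_nceRatio hpsum hpY]
        simp only [sum_const, card_univ, Fintype.card_fin, nsmul_eq_mul, mul_one,
          add_sub_cancel_right]
        field_simp
end

section
/- The shifted Gumbel integral identity: for reals x_1,...,x_N and any fixed index k, ∫_{-∞}^{∞} e^{-z+x_k} exp(-e^{-z+x_k}) ∏_{i≠k} exp(-e^{-z+x_i}) dz = e^{x_k} / Σ_{i=1}^N e^{x_i}. -/
/-!
The Gumbel CDFs multiply to `exp (-S e^{-z})` with `S = ∑ i, e^{x i}`, so the integrand is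
`e^{x k} · e^{-z} exp (-S e^{-z})`; the substitution `u = e^{-z}` turns its integral into
`e^{x k} ∫₀^∞ e^{-S u} du = e^{x k} / S`.
-/

open MeasureTheory

section

open Real

theorem integral_exp_smul_comp_exp {E : Type*} [NormedAddCommGroup E] [NormedSpace ℝ E]
    (g : ℝ → E) : ∫ x, exp x • g (exp x) = ∫ y in Set.Ioi 0, g y := by
  have h := integral_image_eq_integral_abs_deriv_smul MeasurableSet.univ
    (fun x _ ↦ (hasDerivAt_exp x).hasDerivWithinAt) exp_injective.injOn g
  simpa [Set.image_univ, range_exp, abs_of_pos (exp_pos _)] using h.symm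

theorem integral_exp_neg_mul_exp_neg_mul_exp_neg {S : ℝ} (hS : 0 < S) :
    ∫ z, exp (-z) * exp (-(S * exp (-z))) = S⁻¹ := by
  calc ∫ z, exp (-z) * exp (-(S * exp (-z)))
      = ∫ z, exp z • exp (-S * exp z) := by
        simpa [neg_mul] using integral_neg_eq_self (fun z ↦ exp z * exp (-(S * exp z))) volume
    _ = ∫ u in Set.Ioi 0, exp (-S * u) := integral_exp_smul_comp_exp (fun u ↦ exp (-S * u))
    _ = S⁻¹ := by
        rw [integral_exp_mul_Ioi (neg_lt_zero.mpr hS)]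
        simp

theorem prod_exp_neg_exp_neg_add {ι : Type*} (s : Finset ι) (x : ι → ℝ) (z : ℝ) :
    ∏ i ∈ s, exp (-exp (-z + x i)) = exp (-((∑ i ∈ s, exp (x i)) * exp (-z))) := by
  rw [← exp_sum, Finset.sum_mul, ← Finset.sum_neg_distrib]
  simp only [← exp_add, add_comm]

end

/-- The shifted Gumbel integral identity: integrating the Gumbel density
centered at `x k` against the Gumbel CDFs centered at the other `x i` gives
the softmax weight `e^{x_k} / Σ_i e^{x_i}`. -/
theorem gumbel_integral_identity (N : ℕ) (x : Fin N → ℝ) (k : Fin N) :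
    (∫ z : ℝ, Real.exp (-z + x k) * Real.exp (-Real.exp (-z + x k)) *
        ∏ i ∈ Finset.univ.erase k, Real.exp (-Real.exp (-z + x i)))
      = Real.exp (x k) / ∑ i, Real.exp (x i) := by
  set S := ∑ i, Real.exp (x i)
  have hS : 0 < S := Finset.sum_pos (fun i _ ↦ Real.exp_pos _) ⟨k, Finset.mem_univ k⟩
  have integrand_eq : ∀ z : ℝ, Real.exp (-z + x k) * Real.exp (-Real.exp (-z + x k)) *
        ∏ i ∈ Finset.univ.erase k, Real.exp (-Real.exp (-z + x i))
      = Real.exp (x k) * (Real.exp (-z) * Real.exp (-(S * Real.exp (-z)))) := by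
    intro z
    rw [mul_assoc, Finset.mul_prod_erase _ (fun i ↦ Real.exp (-Real.exp (-z + x i)))
      (Finset.mem_univ k), prod_exp_neg_exp_neg_add, Real.exp_add]
    ring
  simp_rw [integrand_eq]
  rw [integral_const_mul, integral_exp_neg_mul_exp_neg_mul_exp_neg hS, div_eq_mul_inv]
end
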